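/- Let q be a conjunctive query over a schema R and let Σ be a sticky set of TGDs over R in normal form. Then for every conjunctive query q′ obtainable from q by a finite sequence of rewriting and factorization steps (in particular, every q′ ∈ q_Σ = XRewrite(q,Σ)), every variable of var(q′) ∖ var(q) occurs exactly once in q′. -/

import Mathlib

namespace OntDB

/-- Terms: constants, labeled nulls, and variables (each indexed by naturals). -/
inductive Term : Type
  | const : ℕ → Term
  | null  : ℕ → Term
  | var   : ℕ → Term
deriving DecidableEq

/-- a term is not a labeled null -/
def Term.noNull : Term → Prop
  | .null _ => False
  | _ => True

/-- Atoms: a predicate symbol applied to a list of argument terms. -/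
structure Atom : Type where
  pred : ℕ
  args : List Term
deriving DecidableEq

/-- A relational schema: a finite set of predicate symbols, each with an arity. -/
structure Schema : Type where
  preds : Finset ℕ
  ar : ℕ → ℕ

/-- arity(R) : the maximum arity over the predicates of R -/
def Schema.maxArity (R : Schema) : ℕ := R.preds.sup R.ar

def Atom.overSchema (R : Schema) (a : Atom) : Prop :=
  a.pred ∈ R.preds ∧ a.args.length = R.ar a.pred

/-- applying a substitution to an atom -/
def Atom.subst (h : Term → Term) (a : Atom) : Atom := ⟨a.pred, a.args.map h⟩

/-- a substitution fixes every constant -/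
def constFix (h : Term → Term) : Prop := ∀ c, h (Term.const c) = Term.const c

/-- A homomorphism from the set of atoms `A` to the set of atoms `A'`. -/
def IsHom (h : Term → Term) (A A' : Set Atom) : Prop :=
  constFix h ∧ ∀ a ∈ A, a.subst h ∈ A'

/-- the variables occurring in an atom -/
def Atom.vars (a : Atom) : Finset ℕ :=
  (a.args.filterMap (fun t => match t with | .var v => some v | _ => none)).toFinset

/-- the number of occurrences of the variable `v` in the atom `a` -/
def Atom.countVar (a : Atom) (v : ℕ) : ℕ := a.args.count (Term.var v)

/-- the variables occurring in a finite set of atoms -/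
def varsOfSet (S : Finset Atom) : Finset ℕ := S.sup Atom.vars

/-- A conjunctive query: a head atom together with a finite set of body atoms. -/
structure CQ : Type where
  head : Atom
  body : Finset Atom
deriving DecidableEq

/-- the variables occurring in a CQ (head and body) -/
def CQ.vars (q : CQ) : Finset ℕ := q.head.vars ∪ varsOfSet q.body

/-- the number of occurrences of the variable `v` in the CQ `q` (head and body) -/
def CQ.countVar (q : CQ) (v : ℕ) : ℕ := q.head.countVar v + ∑ a ∈ q.body, a.countVar v

/-- a variable is shared in `q` if it occurs more than once in `q` -/
def CQ.shared (q : CQ) (v : ℕ) : Prop := 2 ≤ q.countVar v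

/-- a CQ over a schema: body atoms over the schema, and no labeled nulls occur -/
def CQ.overSchema (R : Schema) (q : CQ) : Prop :=
  (∀ a ∈ q.body, a.overSchema R ∧ ∀ t ∈ a.args, t.noNull) ∧ ∀ t ∈ q.head.args, t.noNull

/-- a tuple of constants -/
def isConstTuple (t : List Term) : Prop := ∀ s ∈ t, ∃ c, s = Term.const c

/-- Evaluation of a CQ over an instance: the tuples of constants obtained as images
of the distinguished terms under homomorphisms of the body into the instance. -/
def CQ.eval (q : CQ) (I : Set Atom) : Set (List Term) :=
  { t | isConstTuple t ∧ ∃ h : Term → Term, IsHom h ↑q.body I ∧ q.head.args.map h = t }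

/-- evaluation of a (possibly infinite) union of CQs -/
def ucqEval (Q : Set CQ) (I : Set Atom) : Set (List Term) := ⋃ q ∈ Q, q.eval I

/-- A TGD (in normal form representation): a finite set of body atoms plus a single
head atom; the existentially quantified variables are exactly the head variables
that do not occur in the body. -/
structure TGD : Type where
  body : Finset Atom
  head : Atom
deriving DecidableEq

/-- the universally quantified variables occurring in the head -/
def TGD.frontier (σ : TGD) : Finset ℕ := varsOfSet σ.body ∩ σ.head.vars

/-- the existentially quantified variables -/
def TGD.exVars (σ : TGD) : Finset ℕ := σ.head.vars \ varsOfSet σ.body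

def TGD.vars (σ : TGD) : Finset ℕ := varsOfSet σ.body ∪ σ.head.vars

/-- normal form: at most one existentially quantified variable, occurring once -/
def TGD.NormalForm (σ : TGD) : Prop :=
  σ.exVars.card ≤ 1 ∧ ∀ v ∈ σ.exVars, σ.head.countVar v = 1

/-- a TGD is linear if its body consists of a single atom -/
def TGD.Linear (σ : TGD) : Prop := σ.body.card = 1

/-- a set of TGDs is linear if all its members are -/
def LinearSet (Sig : Finset TGD) : Prop := ∀ σ ∈ Sig, σ.Linear

def TGD.overSchema (R : Schema) (σ : TGD) : Prop :=
  σ.body.Nonempty ∧ (∀ a ∈ σ.body, a.overSchema R ∧ ∀ t ∈ a.args, t.noNull) ∧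
  σ.head.overSchema R ∧ ∀ t ∈ σ.head.args, t.noNull

/-- satisfaction of a TGD by an instance -/
def TGD.sat (σ : TGD) (I : Set Atom) : Prop :=
  ∀ h : Term → Term, IsHom h ↑σ.body I →
    ∃ h' : Term → Term, constFix h' ∧
      (∀ v ∈ σ.frontier, h' (Term.var v) = h (Term.var v)) ∧ σ.head.subst h' ∈ I

/-- satisfaction of a set of TGDs -/
def satSet (Sig : Finset TGD) (I : Set Atom) : Prop := ∀ σ ∈ Sig, σ.sat I

/-- a database for a schema: a finite set of atoms over the schema whose
arguments are constants -/
def IsDatabase (R : Schema) (D : Finset Atom) : Prop :=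
  ∀ a ∈ D, a.overSchema R ∧ ∀ t ∈ a.args, ∃ c, t = Term.const c

/-- the certain answers of a CQ w.r.t. a database and a set of TGDs -/
def certAns (q : CQ) (D : Finset Atom) (Sig : Finset TGD) : Set (List Term) :=
  { t | ∀ I : Set Atom, ↑D ⊆ I → satSet Sig I → t ∈ q.eval I }

/-- the certain answers of a (possibly infinite) union of CQs -/
def certAnsUCQ (Q : Set CQ) (D : Finset Atom) (Sig : Finset TGD) : Set (List Term) :=
  { t | ∀ I : Set Atom, ↑D ⊆ I → satSet Sig I → t ∈ ucqEval Q I }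

/-- a unifier for a finite set of atoms -/
def IsUnifier (γ : Term → Term) (S : Finset Atom) : Prop :=
  constFix γ ∧ ∀ a ∈ S, ∀ b ∈ S, a.subst γ = b.subst γ

def Unifies (S : Finset Atom) : Prop := ∃ γ, IsUnifier γ S

/-- most general unifier -/
def IsMGU (γ : Term → Term) (S : Finset Atom) : Prop :=
  IsUnifier γ S ∧ ∀ γ', IsUnifier γ' S → ∃ δ : Term → Term, ∀ t, γ' t = δ (γ t)

/-- `i` is the position of the existentially quantified variable in head(σ) -/
def TGD.exPos (σ : TGD) (i : ℕ) : Prop :=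
  ∃ z ∈ σ.exVars, σ.head.args[i]? = some (Term.var z)

/-- applicability of the TGD σ to the set S ⊆ body(q) -/
def Applicable (q : CQ) (σ : TGD) (S : Finset Atom) : Prop :=
  S.Nonempty ∧ S ⊆ q.body ∧ Unifies (S ∪ {σ.head}) ∧
  ∀ a ∈ S, ∀ i, σ.exPos i →
    (∀ c, a.args[i]? ≠ some (Term.const c)) ∧
    ∀ v, a.args[i]? = some (Term.var v) → ¬ q.shared v

/-- factorizability of the set S ⊆ body(q) w.r.t. the TGD σ -/
def Factorizable (q : CQ) (σ : TGD) (S : Finset Atom) : Prop :=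
  S ⊆ q.body ∧ 2 ≤ S.card ∧ Unifies S ∧ (∃ i, σ.exPos i) ∧
  ∃ V : ℕ, V ∉ varsOfSet (q.body \ S) ∧
    ∀ a ∈ S, (∃ i, σ.exPos i ∧ a.args[i]? = some (Term.var V)) ∧
      ∀ j, a.args[j]? = some (Term.var V) → σ.exPos j

/-- renaming of variables -/
def renT (ρ : ℕ → ℕ) : Term → Term
  | .var v => .var (ρ v)
  | t => t

/-- renaming the variables of a TGD -/
def TGD.rename (σ : TGD) (ρ : ℕ → ℕ) : TGD :=
  ⟨σ.body.image (Atom.subst (renT ρ)), σ.head.subst (renT ρ)⟩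

/-- applying a substitution to a CQ -/
def CQ.subst (q : CQ) (γ : Term → Term) : CQ :=
  ⟨q.head.subst γ, q.body.image (Atom.subst γ)⟩

/-- the restriction on MGUs used by XRewrite under sticky sets of TGDs:
every variable of the protected set `W` (the variables of the input query) is
mapped to a variable of `W` (or to a constant).  For `W = ∅` no restriction. -/
def ProtectsVars (W : Finset ℕ) (γ : Term → Term) : Prop :=
  ∀ v ∈ W, (∃ u ∈ W, γ (Term.var v) = Term.var u) ∨ ∃ c, γ (Term.var v) = Term.const c

/-- the substitution is the identity on all variables outside `V` -/
def IdOutside (V : Finset ℕ) (γ : Term → Term) : Prop :=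
  ∀ v, v ∉ V → γ (Term.var v) = Term.var v

/-- one rewriting step of XRewrite (applied to `q`, producing `q'`) -/
def IsRewriteStep (Sig : Finset TGD) (W : Finset ℕ) (q q' : CQ) : Prop :=
  ∃ σ ∈ Sig, ∃ ρ : ℕ → ℕ, Function.Injective ρ ∧ (∀ v, ρ v ∉ q.vars) ∧
    ∃ S : Finset Atom, Applicable q (σ.rename ρ) S ∧
      ∃ γ : Term → Term, IsMGU γ (S ∪ {(σ.rename ρ).head}) ∧
        IdOutside (varsOfSet (S ∪ {(σ.rename ρ).head})) γ ∧ ProtectsVars W γ ∧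
        q' = (CQ.mk q.head ((q.body \ S) ∪ (σ.rename ρ).body)).subst γ

/-- one factorization step of XRewrite -/
def IsFactStep (Sig : Finset TGD) (W : Finset ℕ) (q q' : CQ) : Prop :=
  ∃ σ ∈ Sig, ∃ S : Finset Atom, Factorizable q σ S ∧
    ∃ γ : Term → Term, IsMGU γ S ∧ IdOutside (varsOfSet S) γ ∧ ProtectsVars W γ ∧
      q' = q.subst γ

/-- the CQs obtainable from q by a finite sequence of rewriting and
factorization steps -/
inductive Reach (Sig : Finset TGD) (W : Finset ℕ) (q : CQ) : CQ → Prop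
  | refl : Reach Sig W q q
  | rw {p p' : CQ} : Reach Sig W q p → IsRewriteStep Sig W p p' → Reach Sig W q p'
  | fact {p p' : CQ} : Reach Sig W q p → IsFactStep Sig W p p' → Reach Sig W q p'

/-- the output of XRewrite(q,Σ): q together with all CQs obtainable from q by a
finite sequence of rewriting and factorization steps whose last step is a
rewriting step -/
def XRewriteOut (Sig : Finset TGD) (W : Finset ℕ) (q : CQ) : Set CQ :=
  {q} ∪ { p' | ∃ p : CQ, Reach Sig W q p ∧ IsRewriteStep Sig W p p' }

/-- two CQs are the same up to bijective variable renaming -/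
def CQEquiv (p p' : CQ) : Prop :=
  ∃ ρ : ℕ → ℕ, Function.Bijective ρ ∧ p.subst (renT ρ) = p'

/-- the SMarking procedure: `Marked Sig σ v` says that the body variable `v` of
σ gets marked -/
inductive Marked (Sig : Finset TGD) : TGD → ℕ → Prop
  | init {σ : TGD} {v : ℕ} : σ ∈ Sig → v ∈ varsOfSet σ.body → v ∉ σ.head.vars →
      Marked Sig σ v
  | prop {σ σ' : TGD} {v : ℕ} (b : Atom) (u : ℕ → ℕ) : σ ∈ Sig → σ' ∈ Sig →
      v ∈ varsOfSet σ.body → v ∈ σ.head.vars → b ∈ σ'.body →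
      (∀ i : ℕ, σ.head.args[i]? = some (Term.var v) →
        b.args[i]? = some (Term.var (u i))) →
      (∀ i : ℕ, σ.head.args[i]? = some (Term.var v) → Marked Sig σ' (u i)) →
      Marked Sig σ v

/-- a set of TGDs is sticky if every marked variable occurs only once in the
body of its TGD -/
def Sticky (Sig : Finset TGD) : Prop :=
  ∀ σ ∈ Sig, ∀ v : ℕ, Marked Sig σ v → (∑ a ∈ σ.body, a.countVar v) = 1

/- ## Propagation graph and atom coverage -/

/-- a position of a schema: a predicate together with an argument index -/
abbrev Pos := ℕ × ℕ

/-- the edges of the propagation graph -/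
def PGEdge (σ : TGD) (pb ph : Pos) : Prop :=
  ∃ b ∈ σ.body, ∃ v : ℕ,
    b.pred = pb.1 ∧ b.args[pb.2]? = some (Term.var v) ∧
    σ.head.pred = ph.1 ∧ σ.head.args[ph.2]? = some (Term.var v)

/-- `vs` is a path in the propagation graph of Σ with edge labels `ls` -/
def IsPath (Sig : Finset TGD) (vs : List Pos) (ls : List TGD) : Prop :=
  vs.length = ls.length + 1 ∧
  ∀ j < ls.length, ∃ σ pb ph,
    ls[j]? = some σ ∧ vs[j]? = some pb ∧ vs[j + 1]? = some ph ∧ σ ∈ Sig ∧ PGEdge σ pb ph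

/-- a minimal path: no cycle is traversed twice consecutively -/
def MinimalPath (Sig : Finset TGD) (vs : List Pos) (ls : List TGD) : Prop :=
  IsPath Sig vs ls ∧
  ¬ ∃ i j : ℕ, 0 < i ∧ i + 1 < vs.length ∧ 0 < j ∧ j ≤ i ∧ i + j < vs.length ∧
      (∀ k ≤ j, vs[i - j + k]? = vs[i + k]?) ∧ ∀ k < j, ls[i - j + k]? = ls[i + k]?

/-- a tight sequence of (linear) TGDs -/
def TightSeq (σs : List TGD) : Prop :=
  ∀ j, j + 1 < σs.length →
    ∃ σ1 σ2, σs[j]? = some σ1 ∧ σs[j + 1]? = some σ2 ∧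
      ∃ h : Term → Term, constFix h ∧ σ2.body.image (Atom.subst h) = {σ1.head}

/-- a sequence of TGDs compatible to an atom -/
def CompatibleTo (σs : List TGD) (a : Atom) : Prop :=
  ∃ σ1, σs[0]? = some σ1 ∧ ∃ h : Term → Term, constFix h ∧
    σ1.body.image (Atom.subst h) = {a}

/-- pos(a,t): the positions (indices) at which the term t occurs in the atom a -/
def atomPos (a : Atom) (t : Term) : Set ℕ := { i | a.args[i]? = some t }

/-- T(q,a): the constants of a together with the variables of a shared in q -/
def Tq (q : CQ) (a : Atom) : Set Term :=
  { t | t ∈ a.args ∧ ((∃ c, t = Term.const c) ∨ ∃ v, t = Term.var v ∧ q.shared v) }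

/-- atom coverage: a covers b w.r.t. q and Σ -/
def Covers (Sig : Finset TGD) (q : CQ) (a b : Atom) : Prop :=
  (∀ t ∈ Tq q b, t ∈ a.args) ∧
  ∃ σs : List TGD, σs ≠ [] ∧ (∀ σ ∈ σs, σ ∈ Sig) ∧ TightSeq σs ∧ CompatibleTo σs a ∧
    ∀ t ∈ Tq q b, ∀ i ∈ atomPos b t,
      ∃ vs : List Pos, MinimalPath Sig vs σs ∧
        (∃ p0 : Pos, vs[0]? = some p0 ∧ p0.1 = a.pred ∧ p0.2 ∈ atomPos a t) ∧
        vs[vs.length - 1]? = some (b.pred, i)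

/-!
A term is *new* if it is a labeled null or a variable not occurring in the input query.
Rewriting and factorization preserve three properties: no new term occurs in the head, each new
term occurs at most once in the body, and each body atom carrying new terms is covered by a body
atom of some TGD `σ` with a variable marked in `σ` at every position of a new term. Variables
enter only through the renamed body of a TGD `σ`, and one whose image under the MGU is new is
marked in `σ`, hence occurs once in `body(σ)` by stickiness. The MGU identifies two distinct new
terms only where a factorization makes their atoms equal, as one sees by comparing it with a
unifier that keeps them apart.
-/

theorem _root_.List.count_le_one_iff_getElem? {α : Type*} [DecidableEq α] {l : List α}
    {x : α} : l.count x ≤ 1 ↔ ∀ i j : ℕ, l[i]? = some x → l[j]? = some x → i = j := by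
  rw [← not_lt, ← Nat.succ_le_iff, ← List.duplicate_iff_two_le_count,
    List.duplicate_iff_exists_distinct_get]
  constructor
  · intro h i j hi hj
    obtain ⟨hi', rfl⟩ := List.getElem?_eq_some_iff.1 hi
    obtain ⟨hj', hij⟩ := List.getElem?_eq_some_iff.1 hj
    by_contra hne
    rcases Nat.lt_or_gt_of_ne hne with hlt | hlt
    · exact h ⟨⟨i, hi'⟩, ⟨j, hj'⟩, hlt, rfl, hij.symm⟩
    · exact h ⟨⟨j, hj'⟩, ⟨i, hi'⟩, hlt, hij.symm, rfl⟩
  · rintro h ⟨n, m, hnm, hn, hm⟩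
    exact hnm.ne (Fin.ext (h n m (by simp [hn]) (by simp [hm])))

lemma Atom.mem_vars_iff {a : Atom} {v : ℕ} : v ∈ a.vars ↔ Term.var v ∈ a.args := by
  simp only [Atom.vars, List.mem_toFinset, List.mem_filterMap]
  constructor
  · rintro ⟨t, ht, he⟩
    cases t <;> simp_all
  · exact fun h => ⟨_, h, rfl⟩

lemma mem_varsOfSet_iff {M : Finset Atom} {v : ℕ} :
    v ∈ varsOfSet M ↔ ∃ a ∈ M, Term.var v ∈ a.args := by
  simp only [varsOfSet, Finset.mem_sup, Atom.mem_vars_iff]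

lemma Atom.subst_args_getElem? (γ : Term → Term) (a : Atom) (i : ℕ) :
    (a.subst γ).args[i]? = a.args[i]?.map γ := by
  simp [Atom.subst]

lemma Atom.exists_getElem?_of_subst_eq {γ : Term → Term} {a a' : Atom}
    (h : a.subst γ = a'.subst γ) {i : ℕ} {t : Term} (ht : a.args[i]? = some t) :
    ∃ t', a'.args[i]? = some t' ∧ γ t = γ t' := by
  have hi := congrArg (fun b : Atom => b.args[i]?) h
  simp only [Atom.subst_args_getElem?, ht, Option.map_some] at hi
  obtain ⟨t', ht', he⟩ := Option.map_eq_some_iff.1 hi.symm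
  exact ⟨t', ht', he.symm⟩

def Atom.NullFree (a : Atom) : Prop := ∀ t ∈ a.args, t.noNull

def TGD.NullFree (σ : TGD) : Prop := σ.head.NullFree ∧ ∀ b ∈ σ.body, b.NullFree

lemma TGD.overSchema.nullFree {R : Schema} {σ : TGD} (h : σ.overSchema R) : σ.NullFree :=
  ⟨h.2.2.2, fun b hb => (h.2.1 b hb).2⟩

/-- `W` stands for the set of variables of the input query. -/
def Term.IsNew (W : Finset ℕ) : Term → Prop
  | .const _ => False
  | .null _ => True
  | .var v => v ∉ W

instance (W : Finset ℕ) : DecidablePred (Term.IsNew W)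
  | .const _ => inferInstanceAs (Decidable False)
  | .null _ => inferInstanceAs (Decidable True)
  | .var v => inferInstanceAs (Decidable (v ∉ W))

lemma Term.isNew_of_isNew_apply {W : Finset ℕ} {γ : Term → Term} (hγ : constFix γ)
    (hW : ProtectsVars W γ) {t : Term} (h : (γ t).IsNew W) : t.IsNew W := by
  cases t with
  | const c => rw [hγ c] at h; exact h
  | null m => trivial
  | var u =>
    intro hu
    rcases hW u hu with ⟨u', hu', he⟩ | ⟨c, he⟩ <;> rw [he] at h
    exacts [h hu', h]

lemma Atom.NullFree.exists_var_of_rename {W : Finset ℕ} {ρ : ℕ → ℕ} {b : Atom}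
    (hb : b.NullFree) {i : ℕ} {t : Term} (hi : (b.subst (renT ρ)).args[i]? = some t)
    (hnew : t.IsNew W) : ∃ w, b.args[i]? = some (.var w) ∧ t = .var (ρ w) := by
  rw [Atom.subst_args_getElem?] at hi
  obtain ⟨s, hs, rfl⟩ := Option.map_eq_some_iff.1 hi
  cases s with
  | const c => exact hnew.elim
  | null m => exact (hb _ (List.mem_of_getElem? hs)).elim
  | var w => exact ⟨w, hs, rfl⟩

lemma notMem_body_of_mem_rename {W : Finset ℕ} {ρ : ℕ → ℕ} {p : CQ}
    (hρ : ∀ v, ρ v ∉ p.vars) {b : Atom} (hb : b.NullFree) {t : Term}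
    (ht : t ∈ (b.subst (renT ρ)).args) (hnew : t.IsNew W) {a : Atom} (ha : a ∈ p.body) :
    t ∉ a.args := by
  obtain ⟨i, hi⟩ := List.mem_iff_getElem?.1 ht
  obtain ⟨w, -, rfl⟩ := hb.exists_var_of_rename hi hnew
  exact fun h => hρ w (Finset.mem_union_right _ (mem_varsOfSet_iff.2 ⟨a, ha, h⟩))

def OccursAtMostOnce (M : Finset Atom) (t : Term) : Prop :=
  ∀ a ∈ M, ∀ a' ∈ M, ∀ i i' : ℕ, a.args[i]? = some t → a'.args[i']? = some t →
    a = a' ∧ i = i'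

lemma occursAtMostOnce_iff_sum_count_le_one {M : Finset Atom} {t : Term} :
    OccursAtMostOnce M t ↔ ∑ a ∈ M, a.args.count t ≤ 1 := by
  constructor
  · intro h
    by_cases hocc : ∃ a ∈ M, t ∈ a.args
    · obtain ⟨a₀, ha₀, ht₀⟩ := hocc
      obtain ⟨i₀, hi₀⟩ := List.mem_iff_getElem?.1 ht₀
      rw [Finset.sum_eq_single_of_mem a₀ ha₀ fun a ha hne => List.count_eq_zero.2 fun ht => ?_]
      · exact List.count_le_one_iff_getElem?.2 fun i j hi hj => (h a₀ ha₀ a₀ ha₀ i j hi hj).2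
      · obtain ⟨i, hi⟩ := List.mem_iff_getElem?.1 ht
        exact hne (h a ha a₀ ha₀ i i₀ hi hi₀).1
    · push Not at hocc
      rw [Finset.sum_eq_zero fun a ha => List.count_eq_zero.2 (hocc a ha)]
      exact zero_le_one
  · intro h a ha a' ha' i i' hi hi'
    by_cases haa' : a = a'
    · subst haa'
      have hle := (Finset.single_le_sum (fun b _ => Nat.zero_le (b.args.count t)) ha).trans h
      exact ⟨rfl, List.count_le_one_iff_getElem?.1 hle i i' hi hi'⟩
    · have hpair := (Finset.sum_le_sum_of_subset (f := fun b => b.args.count t)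
        (Finset.insert_subset ha (Finset.singleton_subset_iff.2 ha'))).trans h
      rw [Finset.sum_pair haa'] at hpair
      have := List.count_pos_iff.2 (List.mem_of_getElem? hi)
      have := List.count_pos_iff.2 (List.mem_of_getElem? hi')
      omega

lemma occursAtMostOnce_image_subst {M : Finset Atom} {γ : Term → Term} {T : Term}
    (h : ∀ a ∈ M, ∀ a' ∈ M, ∀ (i i' : ℕ) (t t' : Term), a.args[i]? = some t →
      a'.args[i']? = some t' → γ t = T → γ t' = T → a.subst γ = a'.subst γ ∧ i = i') :
    OccursAtMostOnce (M.image (Atom.subst γ)) T := by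
  simp only [OccursAtMostOnce, Finset.mem_image]
  rintro _ ⟨a, ha, rfl⟩ _ ⟨a', ha', rfl⟩ i i' hi hi'
  rw [Atom.subst_args_getElem?] at hi hi'
  obtain ⟨t, ht, rfl⟩ := Option.map_eq_some_iff.1 hi
  obtain ⟨t', ht', he⟩ := Option.map_eq_some_iff.1 hi'
  exact h a ha a' ha' i i' t t' ht ht' rfl he

lemma IsMGU.apply_eq_apply_of_isUnifier {γ β : Term → Term} {U : Finset Atom}
    (hγ : IsMGU γ U) (hβ : IsUnifier β U) {t t' : Term} (h : γ t = γ t') : β t = β t' := by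
  obtain ⟨δ, hδ⟩ := hγ.2 β hβ
  rw [hδ, hδ, h]

lemma IsUnifier.relabel {W : Finset ℕ} {γ κ : Term → Term} {U : Finset Atom}
    (hγ : IsUnifier γ U)
    (hκ : ∀ a ∈ U, ∀ a' ∈ U, ∀ (i : ℕ) (t t' : Term), a.args[i]? = some t →
      a'.args[i]? = some t' → (γ t).IsNew W → κ t = κ t') :
    IsUnifier (fun t => if (γ t).IsNew W then κ t else γ t) U := by
  refine ⟨fun c => by simp [hγ.1 c, Term.IsNew], fun a ha a' ha' => ?_⟩
  have hpred : a.pred = a'.pred := (congrArg Atom.pred (hγ.2 a ha a' ha') :)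
  simp only [Atom.subst, Atom.mk.injEq, hpred, true_and]
  refine List.ext_getElem? fun i => ?_
  simp only [List.getElem?_map]
  cases hi : a.args[i]? with
  | none =>
    cases hi' : a'.args[i]? with
    | none => rfl
    | some t' =>
      obtain ⟨t, ht, -⟩ := Atom.exists_getElem?_of_subst_eq (hγ.2 a' ha' a ha) hi'
      rw [hi] at ht
      cases ht
  | some t =>
    obtain ⟨t', ht', he⟩ := Atom.exists_getElem?_of_subst_eq (hγ.2 a ha a' ha') hi
    rw [ht', Option.map_some, Option.map_some, Option.some.injEq]
    by_cases hnew : (γ t).IsNew W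
    · rw [if_pos hnew, if_pos (he ▸ hnew), hκ a ha a' ha' i t t' hi ht' hnew]
    · rw [if_neg hnew, if_neg (he ▸ hnew), he]

lemma IsMGU.label_eq_of_apply_eq {W : Finset ℕ} {γ κ : Term → Term} {U : Finset Atom}
    (hγ : IsMGU γ U)
    (hκ : ∀ a ∈ U, ∀ a' ∈ U, ∀ (i : ℕ) (t t' : Term), a.args[i]? = some t →
      a'.args[i]? = some t' → (γ t).IsNew W → κ t = κ t')
    {t t' : Term} (h : γ t = γ t') (hnew : (γ t).IsNew W) : κ t = κ t' := by
  have := hγ.apply_eq_apply_of_isUnifier (hγ.1.relabel hκ) h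
  simpa only [if_pos hnew, if_pos (h ▸ hnew)] using this

def MarkedCover (Sig : Finset TGD) (W : Finset ℕ) (σ : TGD) (b a : Atom) : Prop :=
  ∀ (j : ℕ) (t : Term), a.args[j]? = some t → t.IsNew W →
    ∃ w, b.args[j]? = some (.var w) ∧ Marked Sig σ w

lemma MarkedCover.subst {Sig : Finset TGD} {W : Finset ℕ} {σ : TGD} {b a : Atom}
    {γ : Term → Term} (h : MarkedCover Sig W σ b a) (hγ : constFix γ) (hW : ProtectsVars W γ) :
    MarkedCover Sig W σ b (a.subst γ) := by
  intro j t hj hnew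
  rw [Atom.subst_args_getElem?] at hj
  obtain ⟨s, hs, rfl⟩ := Option.map_eq_some_iff.1 hj
  exact h j s hs (Term.isNew_of_isNew_apply hγ hW hnew)

def AnchoredAt (U : Finset Atom) (H : Atom) (t : Term) (w : ℕ) : Prop :=
  ∃ i : ℕ, ∃ a ∈ U, a.args[i]? = some t ∧ H.args[i]? = some (.var w)

structure StickyInv (Sig : Finset TGD) (W : Finset ℕ) (p : CQ) : Prop where
  head_not_new : ∀ t ∈ p.head.args, ¬ t.IsNew W
  occursAtMostOnce : ∀ t, t.IsNew W → OccursAtMostOnce p.body t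
  covered : ∀ a ∈ p.body, ∀ t ∈ a.args, t.IsNew W →
    ∃ σ ∈ Sig, ∃ b ∈ σ.body, MarkedCover Sig W σ b a

namespace StickyInv

variable {Sig : Finset TGD} {W : Finset ℕ} {p : CQ}

lemma init {R : Schema} {q : CQ} (hq : q.overSchema R) : StickyInv Sig q.vars q := by
  have hnot : ∀ t : Term, t.noNull → (∀ v, t = .var v → v ∈ q.vars) → ¬ t.IsNew q.vars := by
    rintro (c | m | v) hnull hvars hnew
    exacts [hnew, hnull, hnew (hvars v rfl)]
  have hbody : ∀ a ∈ q.body, ∀ t ∈ a.args, ¬ t.IsNew q.vars := fun a ha t ht =>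
    hnot t ((hq.1 a ha).2 t ht) fun v hv =>
      Finset.mem_union_right _ (mem_varsOfSet_iff.2 ⟨a, ha, hv ▸ ht⟩)
  refine ⟨fun t ht => hnot t (hq.2 t ht) fun v hv =>
      Finset.mem_union_left _ (Atom.mem_vars_iff.2 (hv ▸ ht)),
    fun t hnew a ha _ _ i _ hi _ => (hbody a ha t (List.mem_of_getElem? hi) hnew).elim,
    fun a ha t ht hnew => (hbody a ha t ht hnew).elim⟩

lemma countVar_eq_one (hp : StickyInv Sig W p) {v : ℕ} (hv : v ∈ p.vars) (hvW : v ∉ W) :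
    p.countVar v = 1 := by
  have hnew : (Term.var v).IsNew W := hvW
  have hhead : p.head.countVar v = 0 :=
    List.count_eq_zero.2 fun h => hp.head_not_new _ h hnew
  have hle := occursAtMostOnce_iff_sum_count_le_one.1 (hp.occursAtMostOnce _ hnew)
  obtain ⟨a, ha, hva⟩ : ∃ a ∈ p.body, Term.var v ∈ a.args := by
    rcases Finset.mem_union.1 hv with h | h
    · exact (hp.head_not_new _ (Atom.mem_vars_iff.1 h) hnew).elim
    · exact mem_varsOfSet_iff.1 h
  have hge := (List.count_pos_iff.2 hva).trans_le
    (Finset.single_le_sum (fun (b : Atom) _ => Nat.zero_le (b.args.count (Term.var v))) ha)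
  simp only [CQ.countVar, Atom.countVar] at hhead ⊢
  omega

lemma not_isNew_of_mem_subst_head (hp : StickyInv Sig W p) {γ : Term → Term}
    (hγ : constFix γ) (hW : ProtectsVars W γ) : ∀ t ∈ (p.head.subst γ).args, ¬ t.IsNew W := by
  simp only [Atom.subst, List.mem_map]
  rintro _ ⟨t, ht, rfl⟩ hnew
  exact hp.head_not_new t ht (Term.isNew_of_isNew_apply hγ hW hnew)

lemma covered_subst (hp : StickyInv Sig W p) {γ : Term → Term} (hγ : constFix γ)
    (hW : ProtectsVars W γ) {a : Atom} (ha : a ∈ p.body) {t : Term}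
    (ht : t ∈ (a.subst γ).args) (hnew : t.IsNew W) :
    ∃ σ ∈ Sig, ∃ b ∈ σ.body, MarkedCover Sig W σ b (a.subst γ) := by
  obtain ⟨s, hs, rfl⟩ := List.mem_map.1 ht
  obtain ⟨σ, hσ, b, hb, hcov⟩ := hp.covered a ha s hs (Term.isNew_of_isNew_apply hγ hW hnew)
  exact ⟨σ, hσ, b, hb, hcov.subst hγ hW⟩

section RewriteStep

variable {σ : TGD} {ρ : ℕ → ℕ} {S : Finset Atom} {γ : Term → Term}

/-- Each head position of `w` meets a new term of an atom of `S`; the atom covering it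
carries marked variables there, which propagates the marking to `w`. -/
lemma marked_of_isNew (hp : StickyInv Sig W p) (hσ : σ ∈ Sig) (hS : S.Nonempty)
    (hSp : S ⊆ p.body) (hγ : IsUnifier γ (S ∪ {(σ.rename ρ).head})) (hW : ProtectsVars W γ)
    {w : ℕ} (hw : w ∈ varsOfSet σ.body) (hnew : (γ (.var (ρ w))).IsNew W) :
    Marked Sig σ w := by
  by_cases hwh : w ∈ σ.head.vars
  swap
  · exact Marked.init hσ hw hwh
  obtain ⟨a, ha⟩ := hS
  have hpartner : ∀ i : ℕ, σ.head.args[i]? = some (.var w) →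
      ∃ t : Term, a.args[i]? = some t ∧ t.IsNew W := by
    intro i hi
    have hHi : (σ.rename ρ).head.args[i]? = some (.var (ρ w)) := by
      simp [TGD.rename, Atom.subst_args_getElem?, hi, renT]
    obtain ⟨t, ht, he⟩ := Atom.exists_getElem?_of_subst_eq
      (hγ.2 _ (by simp) a (by simp [ha])) hHi
    exact ⟨t, ht, Term.isNew_of_isNew_apply hγ.1 hW (he ▸ hnew)⟩
  obtain ⟨i₀, hi₀⟩ := List.mem_iff_getElem?.1 (Atom.mem_vars_iff.1 hwh)
  obtain ⟨t₀, ht₀, hnew₀⟩ := hpartner i₀ hi₀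
  obtain ⟨σ', hσ', b, hb, hcov⟩ := hp.covered a (hSp ha) t₀ (List.mem_of_getElem? ht₀) hnew₀
  have hmarked : ∀ i : ℕ, ∃ u : ℕ, σ.head.args[i]? = some (.var w) →
      b.args[i]? = some (.var u) ∧ Marked Sig σ' u := by
    intro i
    by_cases hi : σ.head.args[i]? = some (.var w)
    · obtain ⟨t, ht, htnew⟩ := hpartner i hi
      obtain ⟨u, hu⟩ := hcov i t ht htnew
      exact ⟨u, fun _ => hu⟩
    · exact ⟨0, fun h => (hi h).elim⟩
  choose u hu using hmarked
  exact Marked.prop b u hσ hσ' hw hwh hb (fun i hi => (hu i hi).1) (fun i hi => (hu i hi).2)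

lemma occursAtMostOnce_rewrite_body (hp : StickyInv Sig W p) (hsticky : Sticky Sig)
    (hσ : σ ∈ Sig) (hnull : σ.NullFree) (hρ : ρ.Injective) (hρp : ∀ v, ρ v ∉ p.vars)
    (hS : S.Nonempty) (hSp : S ⊆ p.body) (hγ : IsUnifier γ (S ∪ {(σ.rename ρ).head}))
    (hW : ProtectsVars W γ) {t : Term} (hnew : (γ t).IsNew W) :
    OccursAtMostOnce (p.body \ S ∪ (σ.rename ρ).body) t := by
  have htnew := Term.isNew_of_isNew_apply hγ.1 hW hnew
  simp only [OccursAtMostOnce, Finset.mem_union, Finset.mem_sdiff, TGD.rename, Finset.mem_image]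
  rintro a (⟨ha, -⟩ | ⟨b, hb, rfl⟩) a' (⟨ha', -⟩ | ⟨b', hb', rfl⟩) i i' hi hi'
  · exact hp.occursAtMostOnce t htnew a ha a' ha' i i' hi hi'
  · exact (notMem_body_of_mem_rename hρp (hnull.2 b' hb') (List.mem_of_getElem? hi') htnew ha
      (List.mem_of_getElem? hi)).elim
  · exact (notMem_body_of_mem_rename hρp (hnull.2 b hb) (List.mem_of_getElem? hi) htnew ha'
      (List.mem_of_getElem? hi')).elim
  · obtain ⟨w, hbw, rfl⟩ := (hnull.2 b hb).exists_var_of_rename hi htnew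
    obtain ⟨w', hbw', hww'⟩ := (hnull.2 b' hb').exists_var_of_rename hi' htnew
    obtain rfl : w = w' := hρ (Term.var.inj hww')
    have hmarked := hp.marked_of_isNew hσ hS hSp hγ hW
      (mem_varsOfSet_iff.2 ⟨b, hb, List.mem_of_getElem? hbw⟩) hnew
    obtain ⟨rfl, rfl⟩ := occursAtMostOnce_iff_sum_count_le_one.2
      (hsticky σ hσ w hmarked).le b hb b' hb' i i' hbw hbw'
    exact ⟨rfl, rfl⟩

lemma anchoredAt_unique (hp : StickyInv Sig W p) (hnull : σ.NullFree)
    (hρp : ∀ v, ρ v ∉ p.vars) (hSp : S ⊆ p.body) {t : Term} (hnew : t.IsNew W) {w w' : ℕ}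
    (h : AnchoredAt (S ∪ {(σ.rename ρ).head}) (σ.rename ρ).head t w)
    (h' : AnchoredAt (S ∪ {(σ.rename ρ).head}) (σ.rename ρ).head t w') : w = w' := by
  obtain ⟨i, a, ha, hai, hHi⟩ := h
  obtain ⟨i', a', ha', hai', hHi'⟩ := h'
  simp only [Finset.mem_union, Finset.mem_singleton] at ha ha'
  by_cases htH : t ∈ (σ.rename ρ).head.args
  · have hnotS : ∀ b ∈ S, t ∉ b.args := fun b hb =>
      notMem_body_of_mem_rename hρp hnull.1 htH hnew (hSp hb)
    obtain rfl := ha.resolve_left fun h => hnotS a h (List.mem_of_getElem? hai)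
    obtain rfl := ha'.resolve_left fun h => hnotS a' h (List.mem_of_getElem? hai')
    rw [hai] at hHi
    rw [hai'] at hHi'
    exact Term.var.inj ((Option.some.inj hHi).symm.trans (Option.some.inj hHi'))
  · have hS : ∀ {b : Atom} {j : ℕ}, b ∈ S ∨ b = (σ.rename ρ).head → b.args[j]? = some t →
        b ∈ S := fun hb hj => hb.resolve_right fun h => htH (h ▸ List.mem_of_getElem? hj)
    obtain ⟨rfl, rfl⟩ := hp.occursAtMostOnce t hnew a (hSp (hS ha hai)) a' (hSp (hS ha' hai'))
      i i' hai hai'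
    rw [hHi] at hHi'
    exact Term.var.inj (Option.some.inj hHi')

lemma eq_var_of_anchoredAt (hp : StickyInv Sig W p) (hnull : σ.NullFree)
    (hρp : ∀ v, ρ v ∉ p.vars) (hSp : S ⊆ p.body) {a : Atom}
    (ha : a ∈ p.body \ S ∪ (σ.rename ρ).body) {i : ℕ} {t : Term} (hi : a.args[i]? = some t)
    (hnew : t.IsNew W) {w : ℕ} (h : AnchoredAt (S ∪ {(σ.rename ρ).head}) (σ.rename ρ).head t w) :
    t = .var w := by
  obtain ⟨j, a₁, ha₁, ha₁j, hHj⟩ := h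
  simp only [Finset.mem_union, Finset.mem_singleton] at ha₁
  rcases ha₁ with ha₁ | rfl
  · exfalso
    simp only [Finset.mem_union, Finset.mem_sdiff, TGD.rename, Finset.mem_image] at ha
    rcases ha with ⟨ha, haS⟩ | ⟨b, hb, rfl⟩
    · obtain ⟨rfl, -⟩ := hp.occursAtMostOnce t hnew a ha a₁ (hSp ha₁) i j hi ha₁j
      exact haS ha₁
    · exact notMem_body_of_mem_rename hρp (hnull.2 b hb) (List.mem_of_getElem? hi) hnew
        (hSp ha₁) (List.mem_of_getElem? ha₁j)
  · rw [ha₁j] at hHj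
    exact Option.some.inj hHj

lemma occursAtMostOnce_rewrite (hp : StickyInv Sig W p) (hsticky : Sticky Sig)
    (hσ : σ ∈ Sig) (hnull : σ.NullFree) (hρ : ρ.Injective) (hρp : ∀ v, ρ v ∉ p.vars)
    (hS : S.Nonempty) (hSp : S ⊆ p.body) (hγ : IsMGU γ (S ∪ {(σ.rename ρ).head}))
    (hW : ProtectsVars W γ) {T : Term} (hT : T.IsNew W) :
    OccursAtMostOnce ((p.body \ S ∪ (σ.rename ρ).body).image (Atom.subst γ)) T := by
  classical
  set H := (σ.rename ρ).head
  have hnew {t : Term} (h : (γ t).IsNew W) : t.IsNew W := Term.isNew_of_isNew_apply hγ.1.1 hW h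
  let κ : Term → Term := fun t => if h : ∃ w, AnchoredAt (S ∪ {H}) H t w then .var h.choose else t
  have hκ_anchored {t : Term} {w : ℕ} (ht : t.IsNew W) (h : AnchoredAt (S ∪ {H}) H t w) :
      κ t = .var w := by
    have hex : ∃ w, AnchoredAt (S ∪ {H}) H t w := ⟨w, h⟩
    simp only [κ, dif_pos hex, hp.anchoredAt_unique hnull hρp hSp ht hex.choose_spec h]
  have hκ_col : ∀ a ∈ S ∪ {H}, ∀ a' ∈ S ∪ {H}, ∀ (i : ℕ) (t t' : Term), a.args[i]? = some t →
      a'.args[i]? = some t' → (γ t).IsNew W → κ t = κ t' := by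
    intro a ha a' ha' i t t' hi hi' htnew
    obtain ⟨h, hH, he⟩ := Atom.exists_getElem?_of_subst_eq (hγ.1.2 a ha H (by simp [H])) hi
    obtain ⟨h', hH', he'⟩ := Atom.exists_getElem?_of_subst_eq (hγ.1.2 a' ha' H (by simp [H])) hi'
    obtain rfl : h = h' := Option.some.inj (hH.symm.trans hH')
    obtain ⟨w, -, rfl⟩ := hnull.1.exists_var_of_rename hH (hnew (he ▸ htnew))
    rw [hκ_anchored (hnew htnew) ⟨i, a, ha, hi, hH⟩,
      hκ_anchored (hnew (he' ▸ he ▸ htnew)) ⟨i, a', ha', hi', hH⟩]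
  have hκ_id {a : Atom} (ha : a ∈ p.body \ S ∪ (σ.rename ρ).body) {i : ℕ} {t : Term}
      (hi : a.args[i]? = some t) (ht : t.IsNew W) : κ t = t := by
    by_cases hex : ∃ w, AnchoredAt (S ∪ {H}) H t w
    · rw [hκ_anchored ht hex.choose_spec, ← hp.eq_var_of_anchoredAt hnull hρp hSp ha hi ht
        hex.choose_spec]
    · simp only [κ, dif_neg hex]
  refine occursAtMostOnce_image_subst fun a ha a' ha' i i' t t' hi hi' ht ht' => ?_
  subst ht
  have htt' : t = t' := by
    rw [← hκ_id ha hi (hnew hT), ← hκ_id ha' hi' (hnew (ht' ▸ hT)),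
      hγ.label_eq_of_apply_eq hκ_col ht'.symm hT]
  subst htt'
  obtain ⟨rfl, rfl⟩ := hp.occursAtMostOnce_rewrite_body hsticky hσ hnull hρ hρp hS hSp hγ.1 hW
    hT a ha a' ha' i i' hi hi'
  exact ⟨rfl, rfl⟩

lemma rewriteStep (hp : StickyInv Sig W p) (hnull : ∀ σ ∈ Sig, σ.NullFree)
    (hsticky : Sticky Sig) {p' : CQ} (hstep : IsRewriteStep Sig W p p') :
    StickyInv Sig W p' := by
  obtain ⟨σ, hσ, ρ, hρ, hρp, S, ⟨hS, hSp, -⟩, γ, hγ, -, hW, rfl⟩ := hstep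
  refine ⟨hp.not_isNew_of_mem_subst_head hγ.1.1 hW, fun T hT =>
    hp.occursAtMostOnce_rewrite hsticky hσ (hnull σ hσ) hρ hρp hS hSp hγ hW hT, ?_⟩
  simp only [CQ.subst, Finset.mem_image, Finset.mem_union, Finset.mem_sdiff, TGD.rename]
  rintro _ ⟨a, ⟨ha, -⟩ | ⟨b, hb, rfl⟩, rfl⟩ t ht hnew
  · exact hp.covered_subst hγ.1.1 hW ha ht hnew
  refine ⟨σ, hσ, b, hb, fun j s hj hsnew => ?_⟩
  rw [Atom.subst_args_getElem?] at hj
  obtain ⟨s', hs', rfl⟩ := Option.map_eq_some_iff.1 hj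
  obtain ⟨w, hbw, rfl⟩ := ((hnull σ hσ).2 b hb).exists_var_of_rename hs'
    (Term.isNew_of_isNew_apply hγ.1.1 hW hsnew)
  exact ⟨w, hbw, hp.marked_of_isNew hσ hS hSp hγ.1 hW
    (mem_varsOfSet_iff.2 ⟨b, hb, List.mem_of_getElem? hbw⟩) hsnew⟩

end RewriteStep

lemma occursAtMostOnce_factor (hp : StickyInv Sig W p) {S : Finset Atom} (hSp : S ⊆ p.body)
    {γ : Term → Term} (hγ : IsMGU γ S) (hW : ProtectsVars W γ) {T : Term} (hT : T.IsNew W) :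
    OccursAtMostOnce (p.body.image (Atom.subst γ)) T := by
  classical
  have hnew {t : Term} (h : (γ t).IsNew W) : t.IsNew W := Term.isNew_of_isNew_apply hγ.1.1 hW h
  let κ : Term → Term := fun t =>
    if h : ∃ j : ℕ, ∃ a ∈ S, a.args[j]? = some t then .const h.choose else t
  have hκ {a : Atom} (ha : a ∈ p.body) {i : ℕ} {t : Term} (hi : a.args[i]? = some t)
      (ht : t.IsNew W) : κ t = if a ∈ S then .const i else t := by
    by_cases hex : ∃ j : ℕ, ∃ a ∈ S, a.args[j]? = some t
    · obtain ⟨a₁, ha₁, hj⟩ := hex.choose_spec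
      obtain ⟨rfl, rfl⟩ := hp.occursAtMostOnce t ht a ha a₁ (hSp ha₁) i _ hi hj
      simp only [κ, dif_pos hex, if_pos ha₁]
    · have haS : a ∉ S := fun haS => hex ⟨i, a, haS, hi⟩
      simp only [κ, dif_neg hex, if_neg haS]
  have hκ_col : ∀ a ∈ S, ∀ a' ∈ S, ∀ (i : ℕ) (t t' : Term), a.args[i]? = some t →
      a'.args[i]? = some t' → (γ t).IsNew W → κ t = κ t' := by
    intro a ha a' ha' i t t' hi hi' htnew
    obtain ⟨t'', ht'', he⟩ := Atom.exists_getElem?_of_subst_eq (hγ.1.2 a ha a' ha') hi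
    obtain rfl : t'' = t' := Option.some.inj (ht''.symm.trans hi')
    rw [hκ (hSp ha) hi (hnew htnew), hκ (hSp ha') hi' (hnew (he ▸ htnew)), if_pos ha,
      if_pos ha']
  refine occursAtMostOnce_image_subst fun a ha a' ha' i i' t t' hi hi' ht ht' => ?_
  subst ht
  have hlabel := hγ.label_eq_of_apply_eq hκ_col ht'.symm hT
  rw [hκ ha hi (hnew hT), hκ ha' hi' (hnew (ht' ▸ hT))] at hlabel
  by_cases haS : a ∈ S <;> by_cases haS' : a' ∈ S <;>
    simp only [haS, haS', if_true, if_false] at hlabel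
  · exact ⟨hγ.1.2 a haS a' haS', Term.const.inj hlabel⟩
  · exact (hlabel ▸ hnew (ht' ▸ hT)).elim
  · exact (hlabel ▸ hnew hT).elim
  · subst hlabel
    obtain ⟨rfl, rfl⟩ := hp.occursAtMostOnce t (hnew hT) a ha a' ha' i i' hi hi'
    exact ⟨rfl, rfl⟩

lemma factStep (hp : StickyInv Sig W p) {p' : CQ} (hstep : IsFactStep Sig W p p') :
    StickyInv Sig W p' := by
  obtain ⟨-, -, S, ⟨hSp, -⟩, γ, hγ, -, hW, rfl⟩ := hstep
  refine ⟨hp.not_isNew_of_mem_subst_head hγ.1.1 hW,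
    fun T hT => hp.occursAtMostOnce_factor hSp hγ hW hT, ?_⟩
  simp only [CQ.subst, Finset.mem_image]
  rintro _ ⟨a, ha, rfl⟩ t ht hnew
  exact hp.covered_subst hγ.1.1 hW ha ht hnew

end StickyInv

theorem xrewrite_sticky_new_vars_once_general
    (R : Schema) (Sig : Finset TGD) (q : CQ)
    (hq : q.overSchema R)
    (hover : ∀ σ ∈ Sig, σ.overSchema R)
    (hsticky : Sticky Sig) :
    ∀ q' : CQ, Reach Sig q.vars q q' →
      ∀ v ∈ q'.vars, v ∉ q.vars → q'.countVar v = 1 := by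
  intro q' hreach
  have hnull : ∀ σ ∈ Sig, σ.NullFree := fun σ hσ => (hover σ hσ).nullFree
  have hinv : StickyInv Sig q.vars q' := by
    induction hreach with
    | refl => exact StickyInv.init hq
    | rw _ hstep ih => exact ih.rewriteStep hnull hsticky hstep
    | fact _ hstep ih => exact ih.factStep hstep
  exact fun v hv hvq => hinv.countVar_eq_one hv hvq

/-- under a sticky set of TGDs in normal form, every variable of a
generated query that does not occur in the input query occurs exactly once. -/
theorem xrewrite_sticky_new_vars_once
    (R : Schema) (Sig : Finset TGD) (q : CQ)
    (hq : q.overSchema R)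
    (hover : ∀ σ ∈ Sig, σ.overSchema R) (hnf : ∀ σ ∈ Sig, σ.NormalForm)
    (hsticky : Sticky Sig) :
    ∀ q' : CQ, Reach Sig q.vars q q' →
      ∀ v ∈ q'.vars, v ∉ q.vars → q'.countVar v = 1 :=
  xrewrite_sticky_new_vars_once_general R Sig q hq hover hsticky

end OntDB
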